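/- Let ω be an elliptic environment and f : D_n → [0,∞) with f ≡ 0 on ∂D_n. Then the pointwise infimum z(x) = inf_{u ∈ 𝒜(ω,f)} u(x) belongs to 𝒜(ω,f) and satisfies |Mz(x)|^{1/d} = f(x)/c(ω,x) for every x ∈ D_n°. -/
import Mathlib


open MeasureTheory Filter Topology
open scoped ENNReal NNReal

noncomputable section

abbrev Zd (d : ℕ) := Fin d → ℤ

/-- The `i`-th standard unit vector of `ℤ^d`. -/
def eZ (d : ℕ) (i : Fin d) : Zd d := Pi.single i 1

/-- `V_d = {±e_1, …, ±e_d, 0}`. -/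
def Vfin (d : ℕ) : Finset (Zd d) :=
  ((Finset.univ.image fun i : Fin d => eZ d i) ∪
    (Finset.univ.image fun i : Fin d => -eZ d i)) ∪ {0}

/-- `S(d)`: probability vectors indexed by `V_d` (as functions on `ℤ^d` supported on `V_d`). -/
def Sd (d : ℕ) : Set (Zd d → ℝ) :=
  {p | (∀ v, 0 ≤ p v) ∧ (∀ v ∉ Vfin d, p v = 0) ∧ ∑ v ∈ Vfin d, p v = 1}

/-- `𝒮(d)`: environments, i.e. maps `ℤ^d → S(d)`, with the product σ-algebra. -/
abbrev Env (d : ℕ) := Zd d → Sd d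

/-- The shift `τ_x` on environments. -/
def shiftE {d : ℕ} (x : Zd d) (ω : Env d) : Env d := fun y => ω (x + y)

/-- `|x|₁ = Σ_i |x_i|`. -/
def normOne {d : ℕ} (x : Zd d) : ℤ := ∑ i, |x i|

/-- The second-order difference operator `Δ_i z(x) = z(x+e_i) + z(x−e_i) − 2 z(x)`. -/
def DC (d : ℕ) (z : Zd d → ℝ) (i : Fin d) (x : Zd d) : ℝ :=
  z (x + eZ d i) + z (x - eZ d i) - 2 * z x

/-- The discrete Monge–Ampère operator `Mz(x) = ∏_i Δ_i z(x)`. -/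
def MA (d : ℕ) (z : Zd d → ℝ) (x : Zd d) : ℝ := ∏ i : Fin d, DC d z i x

/-- `z` is concave on `D_n`: for every `x ∈ D_n°` and `v ∈ {±e_1,…,±e_d}`,
`z(x+v) + z(x−v) − 2z(x) ≤ 0`. -/
def IsConcaveD (d n : ℕ) (z : Zd d → ℝ) : Prop :=
  ∀ x : Zd d, normOne x < (n : ℤ) →
    ∀ v : Zd d, (∃ i : Fin d, v = eZ d i ∨ v = -eZ d i) →
      z (x + v) + z (x - v) - 2 * z x ≤ 0

/-- `c(ω,x) = (∏_{v ∈ V_d ∖ {0}} ω(x,v))^{1/(2d)}`. -/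
def cfun (d : ℕ) (ω : Env d) (x : Zd d) : ℝ :=
  (∏ v ∈ (Vfin d).erase 0, (ω x).1 v) ^ (2 * (d : ℝ))⁻¹

/-- `ω` is elliptic: `ω(x,v) > 0` for all `x` and all `v ∈ V_d ∖ {0}`. -/
def Elliptic (d : ℕ) (ω : Env d) : Prop :=
  ∀ x : Zd d, ∀ v ∈ Vfin d, v ≠ 0 → 0 < (ω x).1 v

/-- `ω` is balanced (env): `ω(x, e_i) = ω(x, −e_i)` for all `x` and `i`. -/
def BalancedEnv (d : ℕ) (ω : Env d) : Prop :=
  ∀ (x : Zd d) (i : Fin d), (ω x).1 (eZ d i) = (ω x).1 (-eZ d i)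

/-- The class `𝒜(ω,f)`: concave `u : D_n → [0,∞)` vanishing on `∂D_n` with
`|Mu(x)|^{1/d} ≥ f(x)/c(ω,x)` on `D_n°`. -/
def memA (d n : ℕ) (ω : Env d) (f : Zd d → ℝ) (u : Zd d → ℝ) : Prop :=
  IsConcaveD d n u ∧
  (∀ x : Zd d, normOne x ≤ (n : ℤ) → 0 ≤ u x) ∧
  (∀ x : Zd d, normOne x = (n : ℤ) → u x = 0) ∧
  ∀ x : Zd d, normOne x < (n : ℤ) → f x / cfun d ω x ≤ |MA d u x| ^ ((d : ℝ)⁻¹)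

/-- The pointwise infimum of the class `𝒜(ω,f)`. -/
def zInf (d n : ℕ) (ω : Env d) (f : Zd d → ℝ) (x : Zd d) : ℝ :=
  sInf {y : ℝ | ∃ u : Zd d → ℝ, memA d n ω f u ∧ u x = y}

namespace Stmt5A

lemma normOne_nonneg {d : ℕ} (x : Zd d) : 0 ≤ normOne x :=
  Finset.sum_nonneg fun i _ => abs_nonneg _

lemma abs_le_normOne {d : ℕ} (x : Zd d) (i : Fin d) : |x i| ≤ normOne x :=
  Finset.single_le_sum (f := fun j => |x j|) (fun j _ => abs_nonneg _) (Finset.mem_univ i)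

lemma normOne_modify {d : ℕ} (x y : Zd d) (i : Fin d) (hy : ∀ j, j ≠ i → y j = x j) :
    normOne y = normOne x - |x i| + |y i| := by
  have h1 : ∑ j ∈ Finset.univ.erase i, |y j| + |y i| = normOne y :=
    Finset.sum_erase_add _ _ (Finset.mem_univ i)
  have h2 : ∑ j ∈ Finset.univ.erase i, |x j| + |x i| = normOne x :=
    Finset.sum_erase_add _ _ (Finset.mem_univ i)
  have h3 : ∑ j ∈ Finset.univ.erase i, |y j| = ∑ j ∈ Finset.univ.erase i, |x j| :=
    Finset.sum_congr rfl fun j hj => by rw [hy j (Finset.ne_of_mem_erase hj)]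
  omega

lemma apply_add_e {d : ℕ} (x : Zd d) (i : Fin d) : (x + eZ d i) i = x i + 1 := by simp [eZ]

lemma apply_sub_e {d : ℕ} (x : Zd d) (i : Fin d) : (x - eZ d i) i = x i - 1 := by simp [eZ]

lemma normOne_add_e {d : ℕ} (x : Zd d) (i : Fin d) :
    normOne (x + eZ d i) = normOne x - |x i| + |x i + 1| := by
  rw [normOne_modify x (x + eZ d i) i (fun j hj => by simp [eZ, Pi.single_apply, hj]),
    apply_add_e]

lemma normOne_sub_e {d : ℕ} (x : Zd d) (i : Fin d) :
    normOne (x - eZ d i) = normOne x - |x i| + |x i - 1| := by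
  rw [normOne_modify x (x - eZ d i) i (fun j hj => by simp [eZ, Pi.single_apply, hj]),
    apply_sub_e]

lemma normOne_add_e_le {d : ℕ} (x : Zd d) (i : Fin d) :
    normOne (x + eZ d i) ≤ normOne x + 1 := by
  rw [normOne_add_e]; have := abs_add_le (x i) 1; simp at this; omega

lemma normOne_sub_e_le {d : ℕ} (x : Zd d) (i : Fin d) :
    normOne (x - eZ d i) ≤ normOne x + 1 := by
  rw [normOne_sub_e]; have := abs_sub (x i) 1; simp at this; omega

lemma quad {d : ℕ} (x : Zd d) (i : Fin d) :
    2 ≤ (normOne (x + eZ d i))^2 + (normOne (x - eZ d i))^2 - 2*(normOne x)^2 := by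
  rw [normOne_add_e, normOne_sub_e]
  have hs := abs_le_normOne x i
  have h0 := normOne_nonneg x
  set s := normOne x
  rcases lt_trichotomy (x i) 0 with h | h | h
  · rw [abs_of_neg h, abs_of_nonpos (by omega), abs_of_neg (by omega)]
    nlinarith
  · rw [h]; norm_num; nlinarith
  · rw [abs_of_pos h, abs_of_pos (by omega), abs_of_nonneg (by omega)]
    nlinarith

end Stmt5A

namespace Stmt5A

lemma auxRpow {d : ℕ} (hd : 0 < d) {A B : ℝ} (hA : 0 ≤ A) (hB : 0 ≤ B) :
    A ≤ B ^ ((d:ℝ)⁻¹) ↔ A ^ d ≤ B := by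
  have hd' : ((d:ℝ)) ≠ 0 := Nat.cast_ne_zero.2 hd.ne'
  constructor
  · intro h
    have h1 : A ^ d ≤ (B ^ ((d:ℝ)⁻¹)) ^ d := pow_le_pow_left₀ hA h d
    have h2 : (B ^ ((d:ℝ)⁻¹)) ^ d = B := by
      rw [← Real.rpow_natCast (B ^ ((d:ℝ)⁻¹)) d, ← Real.rpow_mul hB, inv_mul_cancel₀ hd',
        Real.rpow_one]
    rwa [h2] at h1
  · intro h
    have h1 : ((A ^ d : ℝ)) ^ ((d:ℝ)⁻¹) ≤ B ^ ((d:ℝ)⁻¹) :=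
      Real.rpow_le_rpow (by positivity) h (by positivity)
    rwa [← Real.rpow_natCast A d, ← Real.rpow_mul hA, mul_inv_cancel₀ hd', Real.rpow_one] at h1

lemma auxRpow' {d : ℕ} (hd : 0 < d) {A B : ℝ} (hA : 0 ≤ A) (hB : 0 ≤ B) :
    B ^ ((d:ℝ)⁻¹) ≤ A ↔ B ≤ A ^ d := by
  have hd' : ((d:ℝ)) ≠ 0 := Nat.cast_ne_zero.2 hd.ne'
  constructor
  · intro h
    have h1 : (B ^ ((d:ℝ)⁻¹)) ^ d ≤ A ^ d := pow_le_pow_left₀ (by positivity) h d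
    rwa [← Real.rpow_natCast (B ^ ((d:ℝ)⁻¹)) d, ← Real.rpow_mul hB, inv_mul_cancel₀ hd',
      Real.rpow_one] at h1
  · intro h
    have h1 : B ^ ((d:ℝ)⁻¹) ≤ ((A ^ d : ℝ)) ^ ((d:ℝ)⁻¹) :=
      Real.rpow_le_rpow hB h (by positivity)
    rwa [← Real.rpow_natCast A d, ← Real.rpow_mul hA, mul_inv_cancel₀ hd', Real.rpow_one] at h1

lemma conc_of_DC {d n : ℕ} (z : Zd d → ℝ)
    (h : ∀ x : Zd d, normOne x < (n:ℤ) → ∀ i, DC d z i x ≤ 0) : IsConcaveD d n z := by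
  intro x hx v hv
  obtain ⟨j, rfl | rfl⟩ := hv
  · exact h x hx j
  · have h2 := h x hx j
    have e1 : x + -eZ d j = x - eZ d j := (sub_eq_add_neg x (eZ d j)).symm
    have e2 : x - -eZ d j = x + eZ d j := by rw [sub_neg_eq_add]
    rw [e1, e2]; unfold DC at h2; linarith

lemma DC_of_conc {d n : ℕ} {z : Zd d → ℝ} (h : IsConcaveD d n z) {x : Zd d}
    (hx : normOne x < (n:ℤ)) (i : Fin d) : DC d z i x ≤ 0 :=
  h x hx (eZ d i) ⟨i, Or.inl rfl⟩

lemma abs_MA {d : ℕ} (z : Zd d → ℝ) (x : Zd d) (h : ∀ i, DC d z i x ≤ 0) :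
    |MA d z x| = ∏ i : Fin d, (-(DC d z i x)) := by
  rw [MA, Finset.abs_prod]
  exact Finset.prod_congr rfl fun i _ => abs_of_nonpos (h i)

lemma cfun_pos {d : ℕ} {ω : Env d} (hell : Elliptic d ω) (x : Zd d) : 0 < cfun d ω x :=
  Real.rpow_pos_of_pos
    (Finset.prod_pos fun v hv =>
      hell x v (Finset.mem_of_mem_erase hv) (Finset.ne_of_mem_erase hv)) _

end Stmt5A

namespace Stmt5A

lemma exists_memA (d n : ℕ) (hd : 1 ≤ d) (ω : Env d) (hell : Elliptic d ω)
    (f : Zd d → ℝ) (hf0 : ∀ x : Zd d, normOne x ≤ (n : ℤ) → 0 ≤ f x) :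
    ∃ u : Zd d → ℝ, memA d n ω f u := by
  classical
  set S : Set (Zd d) := {x | normOne x ≤ (n:ℤ)} with hS
  have hSfin : S.Finite := by
    have hsub : S ⊆ Set.pi Set.univ fun _ : Fin d => (Set.Icc (-(n:ℤ)) (n:ℤ)) := by
      intro x hx i _
      have h1 := abs_le_normOne x i
      have h2 : normOne x ≤ (n:ℤ) := hx
      simp only [Set.mem_Icc]
      constructor <;> [skip; skip] <;> (have := abs_le.mp (le_trans h1 h2); omega)
    exact (Set.Finite.pi fun _ => Set.finite_Icc _ _).subset hsub
  set g : Zd d → ℝ := fun x => f x / cfun d ω x with hg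
  have hbddA : BddAbove (g '' S) := (hSfin.image g).bddAbove
  set K : ℝ := max (sSup (g '' S)) 0 with hK
  have hK0 : (0:ℝ) ≤ K := le_max_right _ _
  have hKg : ∀ x : Zd d, normOne x ≤ (n:ℤ) → g x ≤ K := fun x hx =>
    le_trans (le_csSup hbddA ⟨x, hx, rfl⟩) (le_max_left _ _)
  set u : Zd d → ℝ := fun x => K * (((n:ℤ)^2 - (normOne x)^2 : ℤ) : ℝ) with hu
  -- DC of u
  have hDCu : ∀ (x : Zd d) (i : Fin d), DC d u i x ≤ -(2*K) := by
    intro x i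
    have hq := quad x i
    have : DC d u i x =
        -(K * (((normOne (x + eZ d i))^2 + (normOne (x - eZ d i))^2
          - 2*(normOne x)^2 : ℤ) : ℝ)) := by
      unfold DC
      simp only [hu]
      push_cast
      ring
    rw [this]
    have h2 : (2:ℝ) ≤ (((normOne (x + eZ d i))^2 + (normOne (x - eZ d i))^2
        - 2*(normOne x)^2 : ℤ) : ℝ) := by exact_mod_cast hq
    nlinarith
  have hconc : IsConcaveD d n u :=
    conc_of_DC u fun x _ i => le_trans (hDCu x i) (by linarith)
  refine ⟨u, hconc, ?_, ?_, ?_⟩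
  · intro x hx
    have h0 := normOne_nonneg x
    have : (0:ℝ) ≤ (((n:ℤ)^2 - (normOne x)^2 : ℤ) : ℝ) := by
      have : (0:ℤ) ≤ (n:ℤ)^2 - (normOne x)^2 := by nlinarith
      exact_mod_cast this
    exact mul_nonneg hK0 this
  · intro x hx
    simp [hu, hx]
  · intro x hx
    have hgx : 0 ≤ g x := div_nonneg (hf0 x hx.le) (cfun_pos hell x).le
    rw [show f x / cfun d ω x = g x from rfl, auxRpow hd (by exact hgx) (abs_nonneg _)]
    have habs : |MA d u x| = ∏ i : Fin d, (-(DC d u i x)) :=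
      abs_MA u x fun i => le_trans (hDCu x i) (by linarith)
    rw [habs]
    calc g x ^ d = ∏ _i : Fin d, g x := by
          rw [Finset.prod_const, Finset.card_univ, Fintype.card_fin]
      _ ≤ ∏ i : Fin d, (-(DC d u i x)) := by
          refine Finset.prod_le_prod (fun i _ => hgx) (fun i _ => ?_)
          have := hDCu x i
          have h2K : g x ≤ 2*K := le_trans (hKg x hx.le) (by linarith)
          linarith
  
end Stmt5A

open Stmt5A

/-- The pointwise infimum over `𝒜(ω,f)` belongs to `𝒜(ω,f)` and solves the discrete
Monge–Ampère equation on `D_n°`. -/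
theorem stmt5 (d n : ℕ) (hd : 1 ≤ d) (hn : 1 ≤ n) (ω : Env d) (hell : Elliptic d ω)
    (f : Zd d → ℝ)
    (hf0 : ∀ x : Zd d, normOne x ≤ (n : ℤ) → 0 ≤ f x)
    (hfb : ∀ x : Zd d, normOne x = (n : ℤ) → f x = 0) :
    memA d n ω f (zInf d n ω f) ∧
      ∀ x : Zd d, normOne x < (n : ℤ) →
        |MA d (zInf d n ω f) x| ^ ((d : ℝ)⁻¹) = f x / cfun d ω x := by
    classical
  obtain ⟨u₀, hu₀⟩ := exists_memA d n hd ω hell f hf0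
  set z := zInf d n ω f with hzdef
  have hzx : ∀ x : Zd d, z x = sInf {y : ℝ | ∃ u : Zd d → ℝ, memA d n ω f u ∧ u x = y} :=
    fun x => rfl
  have hSne : ∀ x : Zd d, {y : ℝ | ∃ u : Zd d → ℝ, memA d n ω f u ∧ u x = y}.Nonempty :=
    fun x => ⟨u₀ x, u₀, hu₀, rfl⟩
  have hbdd : ∀ x : Zd d, normOne x ≤ (n:ℤ) →
      BddBelow {y : ℝ | ∃ u : Zd d → ℝ, memA d n ω f u ∧ u x = y} := by
    rintro x hx
    exact ⟨0, by rintro y ⟨u, hu, rfl⟩; exact hu.2.1 x hx⟩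
  have hz_le : ∀ u : Zd d → ℝ, memA d n ω f u → ∀ x : Zd d, normOne x ≤ (n:ℤ) →
      z x ≤ u x := fun u hu x hx => csInf_le (hbdd x hx) ⟨u, hu, rfl⟩
  have hz_nonneg : ∀ x : Zd d, normOne x ≤ (n:ℤ) → 0 ≤ z x := by
    intro x hx
    exact le_csInf (hSne x) (by rintro y ⟨u, hu, rfl⟩; exact hu.2.1 x hx)
  have hz_bd : ∀ x : Zd d, normOne x = (n:ℤ) → z x = 0 := by
    intro x hx
    refine le_antisymm ?_ (hz_nonneg x hx.le)
    have := hz_le u₀ hu₀ x hx.le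
    rw [hu₀.2.2.1 x hx] at this; exact this
  have hz_approx : ∀ x : Zd d, ∀ ε : ℝ, 0 < ε →
      ∃ u : Zd d → ℝ, memA d n ω f u ∧ u x < z x + ε := by
    intro x ε hε
    obtain ⟨y, ⟨u, hu, rfl⟩, hy⟩ :=
      exists_lt_of_csInf_lt (hSne x) (lt_add_of_pos_right (z x) hε)
    exact ⟨u, hu, hy⟩
  -- concavity of z
  have hz_DC : ∀ x : Zd d, normOne x < (n:ℤ) → ∀ i : Fin d, DC d z i x ≤ 0 := by
    intro x hx i
    have hle : DC d z i x ≤ 0 + 0 := by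
      refine le_of_forall_pos_le_add ?_
      intro ε hε
      obtain ⟨u, hu, hux⟩ := hz_approx x (ε/2) (by linarith)
      have h1 : z (x + eZ d i) ≤ u (x + eZ d i) :=
        hz_le u hu _ (by have := normOne_add_e_le x i; omega)
      have h2 : z (x - eZ d i) ≤ u (x - eZ d i) :=
        hz_le u hu _ (by have := normOne_sub_e_le x i; omega)
      have h3 : DC d u i x ≤ 0 := DC_of_conc hu.1 hx i
      unfold DC at h3 ⊢
      linarith
    simpa using hle
  have hz_conc : IsConcaveD d n z := conc_of_DC z hz_DC
  -- supersolution property of z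
  have hz_MA : ∀ x : Zd d, normOne x < (n:ℤ) →
      f x / cfun d ω x ≤ |MA d z x| ^ ((d:ℝ)⁻¹) := by
    intro x hx
    have hgx : 0 ≤ f x / cfun d ω x := div_nonneg (hf0 x hx.le) (cfun_pos hell x).le
    rw [auxRpow hd hgx (abs_nonneg _)]
    set a : Fin d → ℝ := fun i => -(DC d z i x) with ha
    have ha0 : ∀ i, 0 ≤ a i := fun i => by have := hz_DC x hx i; simp [ha]; linarith
    have habs : |MA d z x| = ∏ i : Fin d, a i := abs_MA z x (hz_DC x hx)
    rw [habs]
    have key : ∀ ε : ℝ, 0 < ε → (f x / cfun d ω x) ^ d ≤ ∏ i : Fin d, (a i + 2*ε) := by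
      intro ε hε
      obtain ⟨u, hu, hux⟩ := hz_approx x ε hε
      set b : Fin d → ℝ := fun i => -(DC d u i x) with hb
      have hb0 : ∀ i, 0 ≤ b i := fun i => by
        have := DC_of_conc hu.1 hx i; simp [hb]; linarith
      have hba : ∀ i, b i ≤ a i + 2*ε := by
        intro i
        have h1 : z (x + eZ d i) ≤ u (x + eZ d i) :=
          hz_le u hu _ (by have := normOne_add_e_le x i; omega)
        have h2 : z (x - eZ d i) ≤ u (x - eZ d i) :=
          hz_le u hu _ (by have := normOne_sub_e_le x i; omega)
        have hzleu : z x ≤ u x := hz_le u hu x hx.le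
        simp only [ha, hb, DC]
        linarith
      have hufd : (f x / cfun d ω x) ^ d ≤ ∏ i : Fin d, b i := by
        have := hu.2.2.2 x hx
        rw [auxRpow hd hgx (abs_nonneg _)] at this
        rwa [abs_MA u x (fun i => DC_of_conc hu.1 hx i)] at this
      exact le_trans hufd (Finset.prod_le_prod (fun i _ => hb0 i) (fun i _ => hba i))
    -- take the limit ε → 0⁺
    have hcont : Filter.Tendsto (fun ε : ℝ => ∏ i : Fin d, (a i + 2*ε)) (nhdsWithin 0 (Set.Ioi 0))
        (nhds (∏ i : Fin d, a i)) := by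
      have hc : Continuous (fun ε : ℝ => ∏ i : Fin d, (a i + 2*ε)) := by
        apply continuous_finset_prod
        intro i _
        fun_prop
      have h2 := (hc.tendsto 0).mono_left (nhdsWithin_le_nhds (s := Set.Ioi (0:ℝ)))
      simpa using h2
    exact ge_of_tendsto hcont (eventually_mem_nhdsWithin.mono fun ε hε => key ε hε)
  have hmem : memA d n ω f z := ⟨hz_conc, hz_nonneg, hz_bd, hz_MA⟩
  refine ⟨hmem, fun x hx => le_antisymm ?_ (hz_MA x hx)⟩
  by_contra hcon
  set F := f x / cfun d ω x with hF
  have hgx : 0 ≤ F := div_nonneg (hf0 x hx.le) (cfun_pos hell x).le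
  rw [auxRpow' hd hgx (abs_nonneg _)] at hcon
  push_neg at hcon
  set a : Fin d → ℝ := fun i => -(DC d z i x) with ha
  have ha0 : ∀ i, 0 ≤ a i := fun i => by have := hz_DC x hx i; simp [ha]; linarith
  have habs : |MA d z x| = ∏ i : Fin d, a i := abs_MA z x (hz_DC x hx)
  rw [habs] at hcon
  -- hcon : F ^ d < ∏ a i
  have hapos : ∀ i, 0 < a i := by
    intro i
    rcases lt_or_eq_of_le (ha0 i) with h | h
    · exact h
    · exfalso
      have : (∏ i : Fin d, a i) = 0 := Finset.prod_eq_zero (Finset.mem_univ i) h.symm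
      rw [this] at hcon
      exact absurd hcon (not_lt.2 (by positivity))
  haveI : Nonempty (Fin d) := ⟨⟨0, hd⟩⟩
  have hzx_pos : 0 < z x := by
    have hi := hapos (Classical.arbitrary (Fin d))
    set i := Classical.arbitrary (Fin d)
    have h1 : 0 ≤ z (x + eZ d i) := hz_nonneg _ (by have := normOne_add_e_le x i; omega)
    have h2 : 0 ≤ z (x - eZ d i) := hz_nonneg _ (by have := normOne_sub_e_le x i; omega)
    simp only [ha, DC] at hi
    linarith
  set m : ℝ := Finset.univ.inf' Finset.univ_nonempty a with hm
  have hmpos : 0 < m := by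
    rw [hm, Finset.lt_inf'_iff]
    exact fun i _ => hapos i
  have hmle : ∀ i, m ≤ a i := fun i => Finset.inf'_le a (Finset.mem_univ i)
  -- choose δ
  set r : ℝ := min (z x) (m/2) with hr
  have hrpos : 0 < r := lt_min hzx_pos (by linarith)
  have hgcont : Continuous (fun δ : ℝ => ∏ i : Fin d, (a i - 2*δ)) := by
    apply continuous_finset_prod; intro i _; fun_prop
  have hE1 : ∀ᶠ δ : ℝ in nhds 0, F ^ d < ∏ i : Fin d, (a i - 2*δ) := by
    have ht : Filter.Tendsto (fun δ : ℝ => ∏ i : Fin d, (a i - 2*δ)) (nhds 0)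
        (nhds (∏ i : Fin d, a i)) := by
      have := hgcont.tendsto 0
      simpa using this
    exact ht.eventually (eventually_gt_nhds hcon)
  have hE2 : Set.Ioo (0:ℝ) r ∈ nhdsWithin (0:ℝ) (Set.Ioi 0) :=
    Ioo_mem_nhdsGT_of_mem ⟨le_refl 0, hrpos⟩
  obtain ⟨δ, hδ1, hδ2⟩ :=
    ((hE1.filter_mono nhdsWithin_le_nhds).and (Filter.eventually_of_mem hE2 fun _ h => h)).exists
  obtain ⟨hδpos, hδr⟩ := hδ2
  have hδz : δ < z x := lt_of_lt_of_le hδr (min_le_left _ _)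
  have hδm : 2*δ < m := by
    have := lt_of_lt_of_le hδr (min_le_right _ _); linarith
  -- the competitor w
  set w : Zd d → ℝ := Function.update z x (z x - δ) with hw
  have hwx : w x = z x - δ := Function.update_self x _ z
  have hwne : ∀ y : Zd d, y ≠ x → w y = z y := fun y hy => Function.update_of_ne hy _ z
  have hwle : ∀ y : Zd d, w y ≤ z y := by
    intro y
    rcases eq_or_ne y x with rfl | hy
    · rw [hwx]; linarith
    · rw [hwne y hy]
  have hnbr_ne : ∀ i : Fin d, x + eZ d i ≠ x ∧ x - eZ d i ≠ x := by
    intro i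
    constructor
    · intro h
      have := congrFun h i
      rw [apply_add_e] at this; omega
    · intro h
      have := congrFun h i
      rw [apply_sub_e] at this; omega
  have hDCwx : ∀ i : Fin d, DC d w i x = -(a i - 2*δ) := by
    intro i
    unfold DC
    rw [hwx, hwne _ (hnbr_ne i).1, hwne _ (hnbr_ne i).2]
    simp only [ha, DC]
    ring
  have hDCw : ∀ y : Zd d, normOne y < (n:ℤ) → ∀ i : Fin d, DC d w i y ≤ 0 := by
    intro y hy i
    rcases eq_or_ne y x with rfl | hyx
    · rw [hDCwx i]
      have := hmle i
      linarith
    · have h1 : DC d w i y ≤ DC d z i y := by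
        unfold DC
        rw [hwne y hyx]
        have := hwle (y + eZ d i)
        have := hwle (y - eZ d i)
        linarith
      exact le_trans h1 (hz_DC y hy i)
  have hwmem : memA d n ω f w := by
    refine ⟨conc_of_DC w hDCw, ?_, ?_, ?_⟩
    · intro y hy
      rcases eq_or_ne y x with rfl | hyx
      · rw [hwx]; linarith
      · rw [hwne y hyx]; exact hz_nonneg y hy
    · intro y hy
      have hyx : y ≠ x := fun h => by rw [h] at hy; omega
      rw [hwne y hyx]; exact hz_bd y hy
    · intro y hy
      have hgy : 0 ≤ f y / cfun d ω y := div_nonneg (hf0 y hy.le) (cfun_pos hell y).le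
      rw [auxRpow hd hgy (abs_nonneg _), abs_MA w y (hDCw y hy)]
      rcases eq_or_ne y x with rfl | hyx
      · have : (∏ i : Fin d, -(DC d w i y)) = ∏ i : Fin d, (a i - 2*δ) :=
          Finset.prod_congr rfl fun i _ => by rw [hDCwx i]; ring
        rw [this]
        exact le_of_lt hδ1
      · have hprodz : (f y / cfun d ω y) ^ d ≤ ∏ i : Fin d, -(DC d z i y) := by
          have := hz_MA y hy
          rwa [auxRpow hd hgy (abs_nonneg _), abs_MA z y (hz_DC y hy)] at this
        refine le_trans hprodz (Finset.prod_le_prod ?_ ?_)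
        · intro i _
          have := hz_DC y hy i; linarith
        · intro i _
          have h1 : DC d w i y ≤ DC d z i y := by
            unfold DC
            rw [hwne y hyx]
            have := hwle (y + eZ d i)
            have := hwle (y - eZ d i)
            linarith
          linarith
  have := hz_le w hwmem x hx.le
  rw [hwx] at this
  linarith
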